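/- One-step linear contraction of the capped sketched Bregman projection method: let f : ℝ^n → ℝ be μ-strongly convex, x ∈ ℝ^n, x_* ∈ ∂f(x), A x̄ = b, θ ∈ [0,1], and r ∈ Δ_q^† a reference probability vector. Define W := {i : g_i(x) ≥ θ·max_j g_j(x) + (1−θ)·Σ_j r_j g_j(x)}. Assume (i) spectral bounds: σ_∞ > 0 with max_i vᵀ Z_i v ≥ σ_∞‖v‖² and σ_r > 0 with Σ_i r_i·vᵀ Z_i v ≥ σ_r‖v‖², both for all v ∉ Null(A); (ii) an error bound: γ > 0 with γ·D_f^{x_*}(x, x̄) ≤ ‖Ax − b‖²; (iii) p is a probability vector supported in W, and for each i ∈ W there is a point x̂_i with S_iᵀ A x̂_i = S_iᵀ b and x̂_{i,*} ∈ ∂f(x̂_i) satisfying D_f^{x̂_{i,*}}(x̂_i, y) ≤ D_f^{x_*}(x, y) − D_f^{x_*}(x, x̂_i) for all y with S_iᵀ A y = S_iᵀ b. Then Σ_{i∈W} p_i·D_f^{x̂_{i,*}}(x̂_i, x̄) ≤ (1 − μγ(θσ_∞ + (1−θ)σ_r)/(2‖A‖²))·D_f^{x_*}(x, x̄), where ‖A‖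 is the spectral norm of A (assume A ≠ 0). -/

import Mathlib

open Matrix

/-- The spectral norm (ℓ²→ℓ² operator norm) of a real matrix. -/
noncomputable def specNorm {m n : ℕ} (A : Matrix (Fin m) (Fin n) ℝ) : ℝ :=
  ‖LinearMap.toContinuousLinearMap (Matrix.toEuclideanLin A)‖

/-- Maximum of a real-valued function over a finite nonempty index type. -/
noncomputable def fmax {ι : Type*} [Fintype ι] [Nonempty ι] (v : ι → ℝ) : ℝ :=
  Finset.univ.sup' Finset.univ_nonempty v

/-- `x_*` is a subgradient of `f` at `x`. -/
def IsSubgrad {n : ℕ} (f : (Fin n → ℝ) → ℝ) (x xs : Fin n → ℝ) : Prop :=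
  ∀ u : Fin n → ℝ, f u ≥ f x + xs ⬝ᵥ (u - x)

/-- `f` is μ-strongly convex (w.r.t. the Euclidean norm, ‖v‖² = v ⬝ᵥ v). -/
def StronglyConvexWith {n : ℕ} (μ : ℝ) (f : (Fin n → ℝ) → ℝ) : Prop :=
  ∀ x y xs : Fin n → ℝ, IsSubgrad f x xs →
    f y ≥ f x + xs ⬝ᵥ (y - x) + μ / 2 * ((y - x) ⬝ᵥ (y - x))

/-- Bregman distance D_f^{x_*}(x, y) := f(y) − f(x) − ⟨x_*, y − x⟩. -/
noncomputable def breg {n : ℕ} (f : (Fin n → ℝ) → ℝ) (xs x y : Fin n → ℝ) : ℝ :=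
  f y - f x - xs ⬝ᵥ (y - x)

/-! A Bregman projection step onto `{y | S_iᵀ A y = S_iᵀ b}` loses at least
`(μ/2)‖x̂_i − x‖²` of distance to `x̄` by strong convexity, and `‖x̂_i − x‖² ≥ g_i(x)` because
`Z_i = Aᵀ H_i A` is an orthogonal projection (`W_i M_i W_i = W_i`). On the capped set `g_i(x)` is
at least the threshold, which the spectral bounds push above `(θσ_∞ + (1−θ)σ_r)‖x − x̄‖²`, and
`‖x − x̄‖² ≥ ‖A(x − x̄)‖² / ‖A‖² ≥ γ D_f^{x_*}(x, x̄) / ‖A‖²` by the error bound. -/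

section SketchedProjection

variable {m n t : Type*} [Fintype m] [Fintype t]

lemma sketchProj_transpose (A : Matrix m n ℝ) (S : Matrix m t ℝ) {W : Matrix t t ℝ}
    (hW : Wᵀ = W) : (Aᵀ * (S * W * Sᵀ) * A)ᵀ = Aᵀ * (S * W * Sᵀ) * A := by
  simp only [transpose_mul, transpose_transpose, hW, Matrix.mul_assoc]

lemma dotProduct_mul_mul_transpose_mulVec (B : Matrix m t ℝ) (W : Matrix t t ℝ) (u : m → ℝ) :
    u ⬝ᵥ (B * W * Bᵀ) *ᵥ u = Bᵀ *ᵥ u ⬝ᵥ W *ᵥ (Bᵀ *ᵥ u) := by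
  rw [← mulVec_mulVec, ← mulVec_mulVec, dotProduct_mulVec, ← mulVec_transpose]

variable [Fintype n]

lemma dotProduct_mulVec_le_dotProduct_self {Z : Matrix n n ℝ} (hsym : Zᵀ = Z)
    (hidem : Z * Z = Z) (w : n → ℝ) : w ⬝ᵥ Z *ᵥ w ≤ w ⬝ᵥ w := by
  have hZw : Z *ᵥ w ⬝ᵥ Z *ᵥ w = w ⬝ᵥ Z *ᵥ w := by
    rw [dotProduct_mulVec, vecMul_mulVec, ← mulVec_transpose, dotProduct_comm]
    simp only [hsym, hidem]
  have hres : (w - Z *ᵥ w) ⬝ᵥ (w - Z *ᵥ w) = w ⬝ᵥ w - w ⬝ᵥ Z *ᵥ w := by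
    simp only [sub_dotProduct, dotProduct_sub, hZw, dotProduct_comm (Z *ᵥ w) w]
    ring
  have hnonneg := dotProduct_self_star_nonneg (w - Z *ᵥ w)
  rw [star_trivial] at hnonneg
  linarith

lemma sketchProj_mul_self (A : Matrix m n ℝ) (S : Matrix m t ℝ) {W : Matrix t t ℝ}
    (hWMW : W * (Sᵀ * A * Aᵀ * S) * W = W) :
    Aᵀ * (S * W * Sᵀ) * A * (Aᵀ * (S * W * Sᵀ) * A) = Aᵀ * (S * W * Sᵀ) * A := by
  have h := congrArg (· * (Sᵀ * A)) hWMW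
  simp only [Matrix.mul_assoc] at h ⊢
  rw [h]

lemma dotProduct_sketch_eq (A : Matrix m n ℝ) (S : Matrix m t ℝ) (W : Matrix t t ℝ)
    {e : m → ℝ} {w : n → ℝ} (h : Sᵀ *ᵥ e = (Sᵀ * A) *ᵥ w) :
    e ⬝ᵥ (S * W * Sᵀ) *ᵥ e = w ⬝ᵥ (Aᵀ * (S * W * Sᵀ) * A) *ᵥ w := by
  have hA : Aᵀ * (S * W * Sᵀ) * A = (Aᵀ * S) * W * (Aᵀ * S)ᵀ := by
    simp only [transpose_mul, transpose_transpose, Matrix.mul_assoc]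
  rw [hA, dotProduct_mul_mul_transpose_mulVec, dotProduct_mul_mul_transpose_mulVec, h,
    transpose_mul, transpose_transpose]

lemma sketchedLoss_le_dist_sq (A : Matrix m n ℝ) (S : Matrix m t ℝ) {W : Matrix t t ℝ}
    (hW : Wᵀ = W) (hWMW : W * (Sᵀ * A * Aᵀ * S) * W = W) {b : m → ℝ} {y : n → ℝ}
    (hy : (Sᵀ * A) *ᵥ y = Sᵀ *ᵥ b) (x : n → ℝ) :
    (A *ᵥ x - b) ⬝ᵥ (S * W * Sᵀ) *ᵥ (A *ᵥ x - b) ≤ (y - x) ⬝ᵥ (y - x) := by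
  have hres : Sᵀ *ᵥ (A *ᵥ x - b) = (Sᵀ * A) *ᵥ (x - y) := by
    rw [mulVec_sub, mulVec_sub, hy, mulVec_mulVec]
  rw [dotProduct_sketch_eq A S W hres, ← neg_sub, mulVec_neg, neg_dotProduct_neg]
  exact dotProduct_mulVec_le_dotProduct_self (sketchProj_transpose A S hW)
    (sketchProj_mul_self A S hWMW) _

end SketchedProjection

lemma norm_toLp_sq {ι : Type*} [Fintype ι] (u : ι → ℝ) : ‖WithLp.toLp 2 u‖ ^ 2 = u ⬝ᵥ u := by
  rw [← real_inner_self_eq_norm_sq, EuclideanSpace.inner_toLp_toLp, star_trivial]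

lemma mulVec_dotProduct_self_le {m n : ℕ} (A : Matrix (Fin m) (Fin n) ℝ) (v : Fin n → ℝ) :
    A *ᵥ v ⬝ᵥ A *ᵥ v ≤ specNorm A ^ 2 * (v ⬝ᵥ v) := by
  have h := (LinearMap.toContinuousLinearMap (toEuclideanLin A)).le_opNorm (WithLp.toLp 2 v)
  rw [← norm_toLp_sq, ← norm_toLp_sq, ← mul_pow]
  exact pow_le_pow_left₀ (norm_nonneg _) h 2

lemma specNorm_pos {m n : ℕ} {A : Matrix (Fin m) (Fin n) ℝ} (hA : A ≠ 0) : 0 < specNorm A := by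
  rw [specNorm, norm_pos_iff, Ne, map_eq_zero_iff _ LinearMap.toContinuousLinearMap.injective,
    map_eq_zero_iff _ toEuclideanLin.injective]
  exact hA

lemma StronglyConvexWith.half_mul_dist_sq_le_breg {n : ℕ} {μ : ℝ} {f : (Fin n → ℝ) → ℝ}
    (hf : StronglyConvexWith μ f) {x xs : Fin n → ℝ} (hxs : IsSubgrad f x xs) (y : Fin n → ℝ) :
    μ / 2 * ((y - x) ⬝ᵥ (y - x)) ≤ breg f xs x y := by
  have := hf x y xs hxs
  rw [breg]
  linarith

lemma breg_projection_le {m n τ : ℕ} {μ : ℝ} (hμ : 0 ≤ μ) {f : (Fin n → ℝ) → ℝ}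
    (hf : StronglyConvexWith μ f) {x xs : Fin n → ℝ} (hxs : IsSubgrad f x xs)
    (A : Matrix (Fin m) (Fin n) ℝ) (S : Matrix (Fin m) (Fin τ) ℝ) {W : Matrix (Fin τ) (Fin τ) ℝ}
    (hW : Wᵀ = W) (hWMW : W * (Sᵀ * A * Aᵀ * S) * W = W) {b : Fin m → ℝ}
    {xhat xhs y : Fin n → ℝ} (hxhat : (Sᵀ * A) *ᵥ xhat = Sᵀ *ᵥ b)
    (hdesc : breg f xhs xhat y ≤ breg f xs x y - breg f xs x xhat) :
    breg f xhs xhat y ≤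
      breg f xs x y - μ / 2 * ((A *ᵥ x - b) ⬝ᵥ (S * W * Sᵀ) *ᵥ (A *ᵥ x - b)) := by
  have hloss := sketchedLoss_le_dist_sq A S hW hWMW hxhat x
  have hconv := hf.half_mul_dist_sq_le_breg hxs xhat
  have := mul_le_mul_of_nonneg_left hloss (by linarith : (0 : ℝ) ≤ μ / 2)
  linarith

lemma mul_le_cappedThreshold_mul_specNorm_sq {m n τ q : ℕ} [NeZero q]
    (A : Matrix (Fin m) (Fin n) ℝ) {b : Fin m → ℝ} {xbar : Fin n → ℝ} (hxbar : A *ᵥ xbar = b)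
    (S : Fin q → Matrix (Fin m) (Fin τ) ℝ) (W : Fin q → Matrix (Fin τ) (Fin τ) ℝ)
    (x : Fin n → ℝ) {θ : ℝ} (hθ : θ ∈ Set.Icc (0 : ℝ) 1) (r : Fin q → ℝ) {gloss : Fin q → ℝ}
    (hgloss : ∀ i, gloss i = (A *ᵥ x - b) ⬝ᵥ (S i * W i * (S i)ᵀ) *ᵥ (A *ᵥ x - b))
    {σinf : ℝ} (hσinf : 0 ≤ σinf)
    (hspecinf : ∀ v : Fin n → ℝ, A *ᵥ v ≠ 0 →
      σinf * (v ⬝ᵥ v) ≤ fmax (fun i => v ⬝ᵥ (Aᵀ * (S i * W i * (S i)ᵀ) * A) *ᵥ v))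
    {σr : ℝ} (hσr : 0 ≤ σr)
    (hspecr : ∀ v : Fin n → ℝ, A *ᵥ v ≠ 0 →
      σr * (v ⬝ᵥ v) ≤ ∑ i, r i * (v ⬝ᵥ (Aᵀ * (S i * W i * (S i)ᵀ) * A) *ᵥ v))
    {γ D : ℝ} (herr : γ * D ≤ (A *ᵥ x - b) ⬝ᵥ (A *ᵥ x - b)) :
    γ * (θ * σinf + (1 - θ) * σr) * D ≤
      (θ * fmax gloss + (1 - θ) * ∑ j, r j * gloss j) * specNorm A ^ 2 := by
  obtain ⟨hθ0, hθ1⟩ := hθ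
  have hc : 0 ≤ θ * σinf + (1 - θ) * σr :=
    add_nonneg (mul_nonneg hθ0 hσinf) (mul_nonneg (sub_nonneg.2 hθ1) hσr)
  set v := x - xbar
  have hres : A *ᵥ x - b = A *ᵥ v := by rw [mulVec_sub, hxbar]
  by_cases hv : A *ᵥ v = 0
  · have hgloss0 : gloss = 0 := funext fun i => by simp [hgloss, hres, hv]
    have herr0 : γ * D ≤ 0 := by simpa [hres, hv] using herr
    simp only [hgloss0, fmax, Pi.zero_apply, Finset.sup'_const, mul_zero, Finset.sum_const_zero,
      add_zero, zero_mul]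
    nlinarith
  · have hgv : gloss = fun i => v ⬝ᵥ (Aᵀ * (S i * W i * (S i)ᵀ) * A) *ᵥ v :=
      funext fun i => by
        rw [hgloss, dotProduct_sketch_eq A (S i) (W i) (by rw [hres, mulVec_mulVec])]
    have hthreshold : (θ * σinf + (1 - θ) * σr) * (v ⬝ᵥ v) ≤
        θ * fmax gloss + (1 - θ) * ∑ j, r j * gloss j := by
      rw [hgv]
      nlinarith [hspecinf v hv, hspecr v hv]
    calc γ * (θ * σinf + (1 - θ) * σr) * D
        = (θ * σinf + (1 - θ) * σr) * (γ * D) := by ring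
      _ ≤ (θ * σinf + (1 - θ) * σr) * (specNorm A ^ 2 * (v ⬝ᵥ v)) :=
        mul_le_mul_of_nonneg_left ((hres ▸ herr).trans (mulVec_dotProduct_self_le A v)) hc
      _ = (θ * σinf + (1 - θ) * σr) * (v ⬝ᵥ v) * specNorm A ^ 2 := by ring
      _ ≤ _ := by gcongr

lemma sum_mul_le_of_le_of_ne_zero {ι : Type*} [Fintype ι] {p a : ι → ℝ} {c : ℝ}
    (hp : ∀ i, 0 ≤ p i) (hp1 : ∑ i, p i = 1) (h : ∀ i, p i ≠ 0 → a i ≤ c) :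
    ∑ i, p i * a i ≤ c :=
  calc ∑ i, p i * a i ≤ ∑ i, p i * c := Finset.sum_le_sum fun i _ => by
        rcases eq_or_ne (p i) 0 with hpi | hpi
        · simp [hpi]
        · exact mul_le_mul_of_nonneg_left (h i hpi) (hp i)
    _ = c := by rw [← Finset.sum_mul, hp1, one_mul]

/-- `gloss i` is the sketched loss g_i(x); since `p` is supported in the capped set W,
the sum over W is written as the full sum. -/
theorem stmt13_general {m n τ q : ℕ} [NeZero q]
    (A : Matrix (Fin m) (Fin n) ℝ) (hA : A ≠ 0)
    (b : Fin m → ℝ) (xbar : Fin n → ℝ) (hxbar : A.mulVec xbar = b)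
    (S : Fin q → Matrix (Fin m) (Fin τ) ℝ) (W : Fin q → Matrix (Fin τ) (Fin τ) ℝ)
    (hWsym : ∀ i, (W i)ᵀ = W i)
    (hWMW : ∀ i, W i * ((S i)ᵀ * A * Aᵀ * S i) * W i = W i)
    (f : (Fin n → ℝ) → ℝ) (μ : ℝ) (hμ : 0 < μ) (hf : StronglyConvexWith μ f)
    (x xs : Fin n → ℝ) (hxs : IsSubgrad f x xs)
    (θ : ℝ) (hθ : θ ∈ Set.Icc (0 : ℝ) 1)
    (r : Fin q → ℝ)
    (gloss : Fin q → ℝ)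
    (hgloss : ∀ i, gloss i =
      (A.mulVec x - b) ⬝ᵥ (S i * W i * (S i)ᵀ).mulVec (A.mulVec x - b))
    (σinf : ℝ) (hσinf : 0 < σinf)
    (hspecinf : ∀ v : Fin n → ℝ, A.mulVec v ≠ 0 →
      σinf * (v ⬝ᵥ v) ≤ fmax (fun i => v ⬝ᵥ (Aᵀ * (S i * W i * (S i)ᵀ) * A).mulVec v))
    (σr : ℝ) (hσr : 0 < σr)
    (hspecr : ∀ v : Fin n → ℝ, A.mulVec v ≠ 0 →
      σr * (v ⬝ᵥ v) ≤ ∑ i, r i * (v ⬝ᵥ (Aᵀ * (S i * W i * (S i)ᵀ) * A).mulVec v))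
    (γ : ℝ)
    (herr : γ * breg f xs x xbar ≤ (A.mulVec x - b) ⬝ᵥ (A.mulVec x - b))
    (p : Fin q → ℝ) (hp : ∀ i, 0 ≤ p i) (hp1 : ∑ i, p i = 1)
    (hpsupp : ∀ i, p i ≠ 0 →
      gloss i ≥ θ * fmax gloss + (1 - θ) * ∑ j, r j * gloss j)
    (xhat xhs : Fin q → (Fin n → ℝ))
    (hxhatL : ∀ i, gloss i ≥ θ * fmax gloss + (1 - θ) * ∑ j, r j * gloss j →
      ((S i)ᵀ * A).mulVec (xhat i) = (S i)ᵀ.mulVec b)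
    (hadm : ∀ i, gloss i ≥ θ * fmax gloss + (1 - θ) * ∑ j, r j * gloss j →
      ∀ y : Fin n → ℝ, ((S i)ᵀ * A).mulVec y = (S i)ᵀ.mulVec b →
        breg f (xhs i) (xhat i) y ≤ breg f xs x y - breg f xs x (xhat i)) :
    ∑ i, p i * breg f (xhs i) (xhat i) xbar ≤
      (1 - μ * γ * (θ * σinf + (1 - θ) * σr) / (2 * (specNorm A) ^ 2)) *
        breg f xs x xbar := by
  set D := breg f xs x xbar
  set L := θ * fmax gloss + (1 - θ) * ∑ j, r j * gloss j
  have hstep : ∀ i, p i ≠ 0 → breg f (xhs i) (xhat i) xbar ≤ D - μ / 2 * L := by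
    intro i hi
    have hcapped := hpsupp i hi
    have hxbar_i : ((S i)ᵀ * A) *ᵥ xbar = (S i)ᵀ *ᵥ b := by rw [← mulVec_mulVec, hxbar]
    have hproj := breg_projection_le hμ.le hf hxs A (S i) (hWsym i) (hWMW i) (hxhatL i hcapped)
      (hadm i hcapped xbar hxbar_i)
    rw [← hgloss] at hproj
    exact hproj.trans (by gcongr)
  have hL : γ * (θ * σinf + (1 - θ) * σr) * D / specNorm A ^ 2 ≤ L := by
    rw [div_le_iff₀ (pow_pos (specNorm_pos hA) 2)]
    exact mul_le_cappedThreshold_mul_specNorm_sq A hxbar S W x hθ r hgloss hσinf.le hspecinf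
      hσr.le hspecr herr
  calc ∑ i, p i * breg f (xhs i) (xhat i) xbar ≤ D - μ / 2 * L :=
        sum_mul_le_of_le_of_ne_zero hp hp1 hstep
    _ ≤ D - μ / 2 * (γ * (θ * σinf + (1 - θ) * σr) * D / specNorm A ^ 2) := by gcongr
    _ = (1 - μ * γ * (θ * σinf + (1 - θ) * σr) / (2 * specNorm A ^ 2)) * D := by ring

/-- one-step linear contraction of the capped sketched Bregman projection
method: Σ_{i∈W} p_i·D_f^{x̂_{i,*}}(x̂_i, x̄) ≤ (1 − μγ(θσ_∞ + (1−θ)σ_r)/(2‖A‖²))·D_f^{x_*}(x, x̄).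
Here the sketched loss at `x` is `gloss i := (Ax − b)ᵀ H_i (Ax − b)` and the capped set is
W := {i : gloss i ≥ θ·max_j gloss j + (1−θ)·Σ_j r_j·gloss j}; since `p` is supported in W,
the sum over W is written as the full sum Σ_i p_i·D_f^{x̂_{i,*}}(x̂_i, x̄). -/
theorem stmt13 {m n τ q : ℕ} [NeZero q]
    (A : Matrix (Fin m) (Fin n) ℝ) (hA : A ≠ 0)
    (b : Fin m → ℝ) (xbar : Fin n → ℝ) (hxbar : A.mulVec xbar = b)
    (S : Fin q → Matrix (Fin m) (Fin τ) ℝ) (W : Fin q → Matrix (Fin τ) (Fin τ) ℝ)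
    (hWsym : ∀ i, (W i)ᵀ = W i)
    (hMWM : ∀ i, ((S i)ᵀ * A * Aᵀ * S i) * W i * ((S i)ᵀ * A * Aᵀ * S i)
      = (S i)ᵀ * A * Aᵀ * S i)
    (hWMW : ∀ i, W i * ((S i)ᵀ * A * Aᵀ * S i) * W i = W i)
    (hMW : ∀ i, (((S i)ᵀ * A * Aᵀ * S i) * W i)ᵀ = ((S i)ᵀ * A * Aᵀ * S i) * W i)
    (hWM : ∀ i, (W i * ((S i)ᵀ * A * Aᵀ * S i))ᵀ = W i * ((S i)ᵀ * A * Aᵀ * S i))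
    (f : (Fin n → ℝ) → ℝ) (μ : ℝ) (hμ : 0 < μ) (hf : StronglyConvexWith μ f)
    (x xs : Fin n → ℝ) (hxs : IsSubgrad f x xs)
    (θ : ℝ) (hθ : θ ∈ Set.Icc (0 : ℝ) 1)
    (r : Fin q → ℝ) (hr : ∀ i, 0 < r i) (hr1 : ∑ i, r i = 1)
    (gloss : Fin q → ℝ)
    (hgloss : ∀ i, gloss i =
      (A.mulVec x - b) ⬝ᵥ (S i * W i * (S i)ᵀ).mulVec (A.mulVec x - b))
    (σinf : ℝ) (hσinf : 0 < σinf)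
    (hspecinf : ∀ v : Fin n → ℝ, A.mulVec v ≠ 0 →
      σinf * (v ⬝ᵥ v) ≤ fmax (fun i => v ⬝ᵥ (Aᵀ * (S i * W i * (S i)ᵀ) * A).mulVec v))
    (σr : ℝ) (hσr : 0 < σr)
    (hspecr : ∀ v : Fin n → ℝ, A.mulVec v ≠ 0 →
      σr * (v ⬝ᵥ v) ≤ ∑ i, r i * (v ⬝ᵥ (Aᵀ * (S i * W i * (S i)ᵀ) * A).mulVec v))
    (γ : ℝ) (hγ : 0 < γ)
    (herr : γ * breg f xs x xbar ≤ (A.mulVec x - b) ⬝ᵥ (A.mulVec x - b))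
    (p : Fin q → ℝ) (hp : ∀ i, 0 ≤ p i) (hp1 : ∑ i, p i = 1)
    (hpsupp : ∀ i, p i ≠ 0 →
      gloss i ≥ θ * fmax gloss + (1 - θ) * ∑ j, r j * gloss j)
    (xhat xhs : Fin q → (Fin n → ℝ))
    (hxhatL : ∀ i, gloss i ≥ θ * fmax gloss + (1 - θ) * ∑ j, r j * gloss j →
      ((S i)ᵀ * A).mulVec (xhat i) = (S i)ᵀ.mulVec b)
    (hxhs : ∀ i, gloss i ≥ θ * fmax gloss + (1 - θ) * ∑ j, r j * gloss j →
      IsSubgrad f (xhat i) (xhs i))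
    (hadm : ∀ i, gloss i ≥ θ * fmax gloss + (1 - θ) * ∑ j, r j * gloss j →
      ∀ y : Fin n → ℝ, ((S i)ᵀ * A).mulVec y = (S i)ᵀ.mulVec b →
        breg f (xhs i) (xhat i) y ≤ breg f xs x y - breg f xs x (xhat i)) :
    ∑ i, p i * breg f (xhs i) (xhat i) xbar ≤
      (1 - μ * γ * (θ * σinf + (1 - θ) * σr) / (2 * (specNorm A) ^ 2)) *
        breg f xs x xbar :=
  stmt13_general A hA b xbar hxbar S W hWsym hWMW f μ hμ hf x xs hxs θ hθ r gloss hgloss σinf hσinf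
    hspecinf σr hσr hspecr γ herr p hp hp1 hpsupp xhat xhs hxhatL hadm
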